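/- Let R be a commutative semiring in which 3 ≠ 1, and let X be a set. The functions X → R with finite image form an R-submodule Simp(X,R) of the R-module of all functions X → R. Call an R-linear map I : Simp(X,R) → R an R-valued integral on X if I(f) belongs to the image of f for every f ∈ Simp(X,R). Then the map sending an ultrafilter U on X to the operator f ↦ ∫_X f dU is a bijection from the set of ultrafilters on X onto the set of R-valued integrals on X. -/

import Mathlib

universe u

/-- The `R`-submodule `Simp(X, R)` of the `R`-module of all functions `X → R` consisting
of the functions with finite image. -/
def simpSubmodule (X : Type u) (R : Type u) [CommSemiring R] : Submodule R (X → R) where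
  carrier := {f | (Set.range f).Finite}
  zero_mem' := Set.finite_range_const
  add_mem' := by
    intro f g hf hg
    refine (hf.image2 (· + ·) hg).subset ?_
    rintro _ ⟨x, rfl⟩
    exact Set.mem_image2_of_mem ⟨x, rfl⟩ ⟨x, rfl⟩
  smul_mem' := by
    intro c f hf
    refine (hf.image (c * ·)).subset ?_
    rintro _ ⟨x, rfl⟩
    exact ⟨f x, ⟨x, rfl⟩, rfl⟩

namespace Stmt3Aux

variable {X R : Type u} [CommSemiring R]

lemma exists_unique_int (U : Ultrafilter X) (f : simpSubmodule X R) :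
    ∃! b : R, (f : X → R) ⁻¹' {b} ∈ U := by
  have hr : Set.range (f : X → R) ∈ Ultrafilter.map (f : X → R) U := by
    rw [Ultrafilter.mem_map]
    exact Filter.univ_mem' fun x => Set.mem_range_self x
  obtain ⟨b, -, hb⟩ := Ultrafilter.eq_pure_of_finite_mem f.2 hr
  have hbmem : (f : X → R) ⁻¹' {b} ∈ U := by
    have h1 : ({b} : Set R) ∈ Ultrafilter.map (f : X → R) U := by rw [hb]; simp
    exact Ultrafilter.mem_map.mp h1
  refine ⟨b, hbmem, fun b' hb' => ?_⟩
  obtain ⟨x, hx1, hx2⟩ := Filter.nonempty_of_mem (Filter.inter_mem hb' hbmem)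
  exact (Set.mem_singleton_iff.mp hx1).symm.trans (Set.mem_singleton_iff.mp hx2)

noncomputable def intU (U : Ultrafilter X) (f : simpSubmodule X R) : R :=
  (exists_unique_int U f).exists.choose

lemma intU_spec (U : Ultrafilter X) (f : simpSubmodule X R) :
    (f : X → R) ⁻¹' {intU U f} ∈ U :=
  (exists_unique_int U f).exists.choose_spec

lemma intU_eq (U : Ultrafilter X) (f : simpSubmodule X R) {b : R}
    (hb : (f : X → R) ⁻¹' {b} ∈ U) : intU U f = b :=
  (exists_unique_int U f).unique (intU_spec U f) hb

noncomputable def IU (U : Ultrafilter X) : simpSubmodule X R →ₗ[R] R where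
  toFun := intU U
  map_add' f g := by
    refine intU_eq U (f + g) (Filter.mem_of_superset
      (Filter.inter_mem (intU_spec U f) (intU_spec U g)) ?_)
    rintro x ⟨hx1, hx2⟩
    simp only [Set.mem_preimage, Set.mem_singleton_iff] at *
    show (f : X → R) x + (g : X → R) x = _
    rw [hx1, hx2]
  map_smul' c f := by
    show intU U (c • f) = c • intU U f
    refine intU_eq U (c • f) (Filter.mem_of_superset (intU_spec U f) ?_)
    intro x hx
    simp only [Set.mem_preimage, Set.mem_singleton_iff] at *
    show c * (f : X → R) x = c • intU U f
    rw [hx]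
    rfl

lemma IU_mem_range (U : Ultrafilter X) (f : simpSubmodule X R) :
    IU U f ∈ Set.range (f : X → R) := by
  obtain ⟨x, hx⟩ := Filter.nonempty_of_mem (intU_spec U f)
  exact ⟨x, hx⟩

lemma chi_mem (A : Set X) : A.indicator (1 : X → R) ∈ simpSubmodule X R := by
  refine (Set.finite_singleton (0 : R) |>.insert 1).subset ?_
  rintro _ ⟨x, rfl⟩
  by_cases hx : x ∈ A <;> simp [Set.indicator, hx]

noncomputable def chi (A : Set X) : simpSubmodule X R := ⟨A.indicator 1, chi_mem A⟩

lemma chi_preimage_one (h0 : (0 : R) ≠ 1) (A : Set X) :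
    ((chi A : simpSubmodule X R) : X → R) ⁻¹' {1} = A := by
  ext x
  by_cases hx : x ∈ A <;> simp [chi, Set.indicator, hx, h0]

lemma chi_range_mem (I : simpSubmodule X R →ₗ[R] R)
    (hI : ∀ f : simpSubmodule X R, I f ∈ Set.range (f : X → R)) (A : Set X) :
    I (chi A) = 0 ∨ I (chi A) = 1 := by
  obtain ⟨x, hx⟩ := hI (chi A)
  by_cases h : x ∈ A
  · right; rw [← hx]; simp [chi, Set.indicator, h]
  · left; rw [← hx]; simp [chi, Set.indicator, h]

lemma chi_add_compl (A : Set X) : (chi A : simpSubmodule X R) + chi Aᶜ = chi Set.univ := by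
  apply Subtype.ext
  funext x
  by_cases h : x ∈ A <;> simp [chi, Set.indicator, h]

lemma chi_union_inter (A B : Set X) :
    (chi A : simpSubmodule X R) + chi B = chi (A ∪ B) + chi (A ∩ B) := by
  apply Subtype.ext
  funext x
  by_cases hA : x ∈ A <;> by_cases hB : x ∈ B <;>
    simp [chi, Set.indicator, hA, hB]

lemma chi_subset (A B : Set X) (h : A ⊆ B) :
    (chi A : simpSubmodule X R) + chi (B \ A) = chi B := by
  apply Subtype.ext
  funext x
  by_cases hA : x ∈ A
  · have hB := h hA
    simp [chi, Set.indicator, hA, hB]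
  · by_cases hB : x ∈ B <;> simp [chi, Set.indicator, hA, hB]

section Rev

variable (hR : (3 : R) ≠ 1)
include hR

lemma h0 : (0 : R) ≠ 1 := fun h => hR (by rw [show (3:R) = 3 * 1 by ring, ← h, mul_zero, h])

lemma h21 : (2 : R) ≠ 1 := fun h => hR (by
  calc (3 : R) = 2 + 1 := by ring
    _ = 1 + 1 := by rw [h]
    _ = 2 := by ring
    _ = 1 := h)

lemma h20 : (2 : R) ≠ 0 := fun h => hR (by rw [show (3:R) = 2 + 1 by ring, h, zero_add])

variable (I : simpSubmodule X R →ₗ[R] R)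
  (hI : ∀ f : simpSubmodule X R, I f ∈ Set.range (f : X → R))

include hI

omit hR in
lemma I_univ (hX : Nonempty X) : I (chi Set.univ) = 1 := by
  obtain ⟨x, hx⟩ := hI (chi Set.univ)
  rw [← hx]; simp [chi]

lemma I_inter {A B : Set X} (hA : I (chi A) = 1) (hB : I (chi B) = 1) :
    I (chi (A ∩ B)) = 1 := by
  have key : I (chi (A ∪ B)) + I (chi (A ∩ B)) = 2 := by
    rw [← map_add, ← chi_union_inter, map_add, hA, hB]; ring
  rcases chi_range_mem I hI (A ∪ B) with hu | hu <;>
    rcases chi_range_mem I hI (A ∩ B) with hi | hi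
  · rw [hu, hi, add_zero] at key; exact absurd key.symm (h20 hR)
  · rw [hu, hi, zero_add] at key; exact absurd key.symm (h21 hR)
  · rw [hu, hi, add_zero] at key; exact absurd key.symm (h21 hR)
  · exact hi

lemma I_mono {A B : Set X} (h : A ⊆ B) (hA : I (chi A) = 1) : I (chi B) = 1 := by
  have key : I (chi B) = 1 + I (chi (B \ A)) := by
    rw [← chi_subset A B h, map_add, hA]
  rcases chi_range_mem I hI (B \ A) with hd | hd <;> rw [hd] at key
  · simpa using key
  · exfalso
    rcases chi_range_mem I hI B with hb | hb <;> rw [hb] at key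
    · exact h20 hR (by rw [show (2:R) = 1 + 1 by ring, ← key])
    · exact h21 hR (by rw [show (2:R) = 1 + 1 by ring, ← key])

lemma I_compl (hX : Nonempty X) {A : Set X} :
    I (chi Aᶜ) = 1 ↔ ¬ I (chi A) = 1 := by
  have key : I (chi A) + I (chi Aᶜ) = 1 := by
    rw [← map_add, chi_add_compl, I_univ I hI hX]
  constructor
  · intro h hA
    rw [hA, h] at key
    exact h21 hR (by rw [show (2:R) = 1 + 1 by ring, key])
  · intro h
    rcases chi_range_mem I hI A with hA | hA
    · rcases chi_range_mem I hI Aᶜ with hc | hc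
      · rw [hA, hc, add_zero] at key; exact absurd key (h0 hR)
      · exact hc
    · exact absurd hA h

omit hR hI in
lemma dummy_aux : True := trivial

end Rev

noncomputable def UI (hR : (3 : R) ≠ 1) (I : simpSubmodule X R →ₗ[R] R)
    (hI : ∀ f : simpSubmodule X R, I f ∈ Set.range (f : X → R))
    (hX : Nonempty X) : Ultrafilter X :=
  Ultrafilter.ofComplNotMemIff
    (Filter.mk {A | I (chi A) = 1} (I_univ I hI hX)
      (fun hA h => I_mono hR I hI h hA) (fun hA hB => I_inter hR I hI hA hB))
    (fun s => by
      constructor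
      · intro h
        rcases chi_range_mem I hI s with hs | hs
        · exact absurd ((I_compl hR I hI hX).mpr
            (fun h1 => h0 hR (hs ▸ h1.symm ▸ rfl))) h
        · exact hs
      · intro hs hc
        exact ((I_compl hR I hI hX).mp hc) hs)

lemma mem_UI (hR : (3 : R) ≠ 1) (I : simpSubmodule X R →ₗ[R] R)
    (hI : ∀ f : simpSubmodule X R, I f ∈ Set.range (f : X → R))
    (hX : Nonempty X) {A : Set X} : A ∈ UI hR I hI hX ↔ I (chi A) = 1 :=
  Iff.rfl

lemma decompose (f : simpSubmodule X R) :
    f = ∑ b ∈ f.2.toFinset, b • chi ((f : X → R) ⁻¹' {b}) := by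
  apply Subtype.ext
  have h := map_sum ((simpSubmodule X R).subtype)
    (fun b => b • chi ((f : X → R) ⁻¹' {b})) f.2.toFinset
  simp only [map_smul, Submodule.coe_subtype, Submodule.subtype_apply] at h
  rw [show ((∑ b ∈ f.2.toFinset, b • chi ((f : X → R) ⁻¹' {b}) : simpSubmodule X R) : X → R)
      = _ from h]
  funext x
  have hmem : (f : X → R) x ∈ f.2.toFinset := by
    exact (Set.Finite.mem_toFinset (s := Set.range (f : X → R)) (hs := f.2)).mpr ⟨x, rfl⟩
  rw [Finset.sum_apply, Finset.sum_eq_single ((f : X → R) x)]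
  · simp [chi, Set.indicator]
  · intro b hb hne
    simp [chi, Set.indicator, hne.symm]
  · intro h'
    exact absurd hmem h'

end Stmt3Aux

/-- An `R`-valued integral on `X` is an `R`-linear map `I : Simp(X,R) → R` such that
`I f` belongs to the image of `f` for every `f`.  If `3 ≠ 1` in the commutative semiring
`R`, then the map sending an ultrafilter `U` on `X` to the operator `f ↦ ∫_X f dU` (where
`∫_X f dU` is the unique `b` with `f ⁻¹' {b} ∈ U`) is a bijection from the set of
ultrafilters on `X` onto the set of `R`-valued integrals on `X`. -/
theorem stmt3 (R : Type u) [CommSemiring R] (hR : (3 : R) ≠ 1) (X : Type u) :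
    ∃ Φ : Ultrafilter X ≃
        {I : simpSubmodule X R →ₗ[R] R // ∀ f : simpSubmodule X R,
          I f ∈ Set.range (f : X → R)},
      ∀ (U : Ultrafilter X) (f : simpSubmodule X R),
        (f : X → R) ⁻¹' {(Φ U).1 f} ∈ U := by

  classical
  have key : ∀ (U V : Ultrafilter X), Stmt3Aux.IU (R := R) U = Stmt3Aux.IU V →
      ∀ A ∈ U, A ∈ V := by
    intro U V hUV A hA
    have h1 : Stmt3Aux.IU (R := R) U (Stmt3Aux.chi A) = 1 :=
      Stmt3Aux.intU_eq U _ (by rw [Stmt3Aux.chi_preimage_one (Stmt3Aux.h0 hR)]; exact hA)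
    have h2 : Stmt3Aux.IU (R := R) V (Stmt3Aux.chi A) = 1 := by rw [← hUV]; exact h1
    have h3 := Stmt3Aux.intU_spec V (Stmt3Aux.chi (R := R) A)
    rwa [show Stmt3Aux.intU V (Stmt3Aux.chi (R := R) A)
        = Stmt3Aux.IU (R := R) V (Stmt3Aux.chi A) from rfl, h2,
      Stmt3Aux.chi_preimage_one (Stmt3Aux.h0 hR)] at h3
  refine ⟨Equiv.ofBijective (fun U => ⟨Stmt3Aux.IU U, Stmt3Aux.IU_mem_range U⟩) ⟨?_, ?_⟩,
    fun U f => Stmt3Aux.intU_spec U f⟩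
  · intro U V h
    have hIU : Stmt3Aux.IU (R := R) U = Stmt3Aux.IU V := congrArg Subtype.val h
    exact Ultrafilter.coe_injective (Filter.ext fun A =>
      ⟨key U V hIU A, key V U hIU.symm A⟩)
  · rintro ⟨I, hI⟩
    have hX : Nonempty X := by
      by_contra h
      obtain ⟨x, -⟩ := hI 0
      exact h ⟨x⟩
    refine ⟨Stmt3Aux.UI hR I hI hX, ?_⟩
    apply Subtype.ext
    apply LinearMap.ext
    intro f
    set U := Stmt3Aux.UI hR I hI hX with hU
    obtain ⟨b₀, hb₀s, hb₀⟩ : ∃ b₀ ∈ f.2.toFinset, ((f : X → R) ⁻¹' {b₀}) ∈ U := by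
      have huniv : (⋃ b ∈ (f.2.toFinset : Set R), (f : X → R) ⁻¹' {b}) = Set.univ := by
        ext x
        simp [Set.Finite.mem_toFinset]
        exact (Set.Finite.mem_toFinset (s := Set.range (f : X → R)) (hs := f.2)).mpr ⟨x, rfl⟩
      have hmem : (⋃ b ∈ (f.2.toFinset : Set R), (f : X → R) ⁻¹' {b}) ∈ U := by
        rw [huniv]; exact Filter.univ_mem
      obtain ⟨b, hb1, hb2⟩ :=
        (Ultrafilter.finite_biUnion_mem_iff f.2.toFinset.finite_toSet).mp hmem
      exact ⟨b, by simpa using hb1, hb2⟩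
    have hIf : I f = b₀ := by
      conv_lhs => rw [Stmt3Aux.decompose f]
      rw [map_sum, Finset.sum_eq_single b₀]
      · have h1 : I (Stmt3Aux.chi ((f : X → R) ⁻¹' {b₀})) = 1 :=
          (Stmt3Aux.mem_UI hR I hI hX).mp hb₀
        rw [map_smul, h1, smul_eq_mul, mul_one]
      · intro b hb hne
        have hnmem : ((f : X → R) ⁻¹' {b}) ∉ U := by
          intro hmem
          obtain ⟨x, hx1, hx2⟩ := Filter.nonempty_of_mem (Filter.inter_mem hmem hb₀)
          exact hne ((Set.mem_singleton_iff.mp hx1).symm.trans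
            (Set.mem_singleton_iff.mp hx2))
        have h0 : I (Stmt3Aux.chi ((f : X → R) ⁻¹' {b})) = 0 := by
          rcases Stmt3Aux.chi_range_mem I hI ((f : X → R) ⁻¹' {b}) with h | h
          · exact h
          · exact absurd ((Stmt3Aux.mem_UI hR I hI hX).mpr h) hnmem
        rw [map_smul, h0, smul_zero]
      · intro h'
        exact absurd hb₀s h'
    show Stmt3Aux.intU U f = I f
    rw [hIf]
    exact Stmt3Aux.intU_eq U f hb₀
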